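/- Let c, s, L, E, I > 0 and a > 0 with a ≠ 8 and a ≠ 16 be reals, let x₀ ∈ [0,1), and let P ≥ 1 be an integer. Then Σ_{i=1}^P (a^{i−1}/(E·I)) ∫_0^{L·2^{1−i}} (H_i − s·x)·(1 − 2ρ_i(x₀)) · c·2^{−i}·(L·2^{1−i} − x) dx = (4·c·s·L³/(E·I)) · ( (5 − 5(a/16)^P)/(48 − 3a) − (10/(3a))·C_{P,a/16}(x₀) − ((1/2)^P − (a/16)^P)/(8 − a) + (1/(2^{P−1}·a))·C_{P,a/8}(x₀) ), where H_i = s·L·(2^{2−i} − 2^{1−P}). -/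

import Mathlib

/-!
Each level integrand is the product of two affine functions of `x`, so its integral over
`[0, ℓ]` is `A ℓ²/2 - u ℓ³/6`. With `ℓ = L·2^{1-i}` and the weight `a^{i-1}`, level `i`
contributes `4csL³/(EI) · (5/(3a)·(a/16)^i - 2^{-P}/a·(a/8)^i) · (1 - 2ρ_i(x₀))`. Summing over
the levels, the parts without `ρ_i` are geometric sums in `a/16` and `a/8`, and the parts
with `ρ_i` are exactly `C_{P,a/16}(x₀)` and `C_{P,a/8}(x₀)`.
-/

/-- The `k`-th binary digit of `x ∈ [0,1)`: ρ_k(x) = ⌊2^k x⌋ − 2⌊2^{k−1} x⌋. -/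
noncomputable def binDigit (k : ℕ) (x : ℝ) : ℤ := ⌊(2:ℝ) ^ k * x⌋ - 2 * ⌊(2:ℝ) ^ (k - 1) * x⌋

/-- The partial sum C_{P,t}(x) = Σ_{k=1}^P ρ_k(x) t^k. -/
noncomputable def Cpart (P : ℕ) (t x : ℝ) : ℝ :=
  ∑ k ∈ Finset.Icc 1 P, (binDigit k x : ℝ) * t ^ k

open Finset intervalIntegral

theorem integral_sub_mul_sub (A u ℓ : ℝ) :
    ∫ x in (0:ℝ)..ℓ, (A - u * x) * (ℓ - x) = A * ℓ ^ 2 / 2 - u * ℓ ^ 3 / 6 := by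
  have hderiv : ∀ x ∈ Set.uIcc (0:ℝ) ℓ, HasDerivAt
      (fun x => A * ℓ * x - (A + u * ℓ) * x ^ 2 / 2 + u * x ^ 3 / 3)
      ((A - u * x) * (ℓ - x)) x := fun x _ =>
    ((((hasDerivAt_id x).const_mul (A * ℓ)).sub
      (((hasDerivAt_pow 2 x).const_mul (A + u * ℓ)).div_const 2)).add
      (((hasDerivAt_pow 3 x).const_mul u).div_const 3)).congr_deriv (by simp; ring)
  rw [integral_eq_sub_of_hasDerivAt hderiv (Continuous.intervalIntegrable (by fun_prop) _ _)]
  ring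

theorem level_bending_term_eq (c s L E I d : ℝ) {a : ℝ} (ha : a ≠ 0) {i : ℕ} (hi : 1 ≤ i)
    (P : ℕ) :
    a ^ (i - 1) / (E * I) * ∫ x in (0:ℝ)..(L * 2 ^ ((1:ℤ) - (i:ℤ))),
        (s * L * (2 ^ ((2:ℤ) - (i:ℤ)) - 2 ^ ((1:ℤ) - (P:ℤ))) - s * x) * d *
          (c * 2 ^ (-(i:ℤ)) * (L * 2 ^ ((1:ℤ) - (i:ℤ)) - x)) =
      4 * c * s * L ^ 3 / (E * I) *
        (5 / (3 * a) * ((a / 16) ^ i * d) - (1 / 2) ^ P / a * ((a / 8) ^ i * d)) := by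
  simp only [mul_comm _ d, mul_assoc d, mul_left_comm _ (c * _)]
  rw [integral_const_mul, integral_const_mul, integral_sub_mul_sub]
  have h16 : (16:ℝ) ^ i = (2 ^ i) ^ 4 := by rw [← pow_mul, mul_comm, pow_mul]; norm_num
  have h8 : (8:ℝ) ^ i = (2 ^ i) ^ 3 := by rw [← pow_mul, mul_comm, pow_mul]; norm_num
  simp only [zpow_sub₀ (two_ne_zero : (2:ℝ) ≠ 0), zpow_neg, zpow_natCast, div_pow, h16, h8,
    ← pow_sub_mul_pow a hi, pow_one]
  field_simp
  ring

theorem sum_pow_mul_one_sub_two_binDigit {t : ℝ} (ht : t ≠ 1) (P : ℕ) (x : ℝ) :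
    ∑ k ∈ Icc 1 P, t ^ k * (1 - 2 * (binDigit k x : ℝ)) =
      (t ^ (P + 1) - t) / (t - 1) - 2 * Cpart P t x := by
  have hgeom : ∑ k ∈ Icc 1 P, t ^ k = (t ^ (P + 1) - t) / (t - 1) := by
    rw [← Ico_add_one_right_eq_Icc, geom_sum_Ico ht (by omega), pow_one]
  rw [← hgeom, Cpart, mul_sum, ← sum_sub_distrib]
  exact sum_congr rfl fun k _ => by ring

theorem horizontal_bending_term_general (c s L E I a : ℝ) (ha : 0 < a) (ha8 : a ≠ 8) (ha16 : a ≠ 16)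
    (x₀ : ℝ) (P : ℕ) :
    ∑ i ∈ Finset.Icc 1 P, (a ^ (i - 1) / (E * I)) *
      ∫ x in (0:ℝ)..(L * 2 ^ ((1:ℤ) - (i:ℤ))),
        (s * L * (2 ^ ((2:ℤ) - (i:ℤ)) - 2 ^ ((1:ℤ) - (P:ℤ))) - s * x) *
          (1 - 2 * (binDigit i x₀ : ℝ)) *
          (c * 2 ^ (-(i:ℤ)) * (L * 2 ^ ((1:ℤ) - (i:ℤ)) - x)) =
    (4 * c * s * L ^ 3 / (E * I)) *
      ((5 - 5 * (a / 16) ^ P) / (48 - 3 * a) - (10 / (3 * a)) * Cpart P (a / 16) x₀ -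
        ((1 / 2) ^ P - (a / 16) ^ P) / (8 - a) +
        (1 / (2 ^ ((P:ℤ) - 1) * a)) * Cpart P (a / 8) x₀) := by
  have h16 : a / 16 ≠ 1 := by rwa [ne_eq, div_eq_one_iff_eq (by norm_num)]
  have h8 : a / 8 ≠ 1 := by rwa [ne_eq, div_eq_one_iff_eq (by norm_num)]
  rw [sum_congr rfl fun i hi => level_bending_term_eq c s L E I _ ha.ne' (mem_Icc.1 hi).1 P,
    ← mul_sum, sum_sub_distrib, ← mul_sum, ← mul_sum,
    sum_pow_mul_one_sub_two_binDigit h16, sum_pow_mul_one_sub_two_binDigit h8]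
  have h2P : (2:ℝ) ^ ((P:ℤ) - 1) = 2 ^ P / 2 := by
    rw [zpow_sub₀ two_ne_zero, zpow_one, zpow_natCast]
  have h16P : (a / 16) ^ P = (1 / 2) ^ P * (a / 8) ^ P := by rw [← mul_pow]; ring_nf
  rw [pow_succ (a / 16), pow_succ (a / 8), h16P, one_div_pow, h2P]
  have : 48 - 3 * a ≠ 0 := fun h => ha16 (by linarith)
  have : a ≠ 0 := ha.ne'
  field_simp
  ring

/-- Bending-moment term of the PVW for the horizontal displacement of the end node at
`x₀` in a binary tree structure with `P` levels, for `a ≠ 8`, `a ≠ 16`. -/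
theorem horizontal_bending_term (c s L E I a : ℝ) (hc : 0 < c) (hs : 0 < s) (hL : 0 < L)
    (hE : 0 < E) (hI : 0 < I) (ha : 0 < a) (ha8 : a ≠ 8) (ha16 : a ≠ 16)
    (x₀ : ℝ) (hx₀ : x₀ ∈ Set.Ico (0:ℝ) 1) (P : ℕ) (hP : 1 ≤ P) :
    ∑ i ∈ Finset.Icc 1 P, (a ^ (i - 1) / (E * I)) *
      ∫ x in (0:ℝ)..(L * 2 ^ ((1:ℤ) - (i:ℤ))),
        (s * L * (2 ^ ((2:ℤ) - (i:ℤ)) - 2 ^ ((1:ℤ) - (P:ℤ))) - s * x) *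
          (1 - 2 * (binDigit i x₀ : ℝ)) *
          (c * 2 ^ (-(i:ℤ)) * (L * 2 ^ ((1:ℤ) - (i:ℤ)) - x)) =
    (4 * c * s * L ^ 3 / (E * I)) *
      ((5 - 5 * (a / 16) ^ P) / (48 - 3 * a) - (10 / (3 * a)) * Cpart P (a / 16) x₀ -
        ((1 / 2) ^ P - (a / 16) ^ P) / (8 - a) +
        (1 / (2 ^ ((P:ℤ) - 1) * a)) * Cpart P (a / 8) x₀) :=
  horizontal_bending_term_general c s L E I a ha ha8 ha16 x₀ P
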